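/- arXiv:1311.6563 — 4 statements merged into one kernel-verified Lean document; each statement's English description precedes it below -/
import Mathlib

section
/- No-cloning theorem: Let n : ℕ, let V = EuclideanSpace ℂ (Fin n) and W = EuclideanSpace ℂ (Fin n × Fin n), and for v w : V write v ⊗ w : W for the vector (v ⊗ w) (i,j) = v i * w j. Suppose D : W →ₗ[ℂ] W preserves inner products (for all u v : W, ⟪D u, D v⟫ = ⟪u, v⟫), and suppose e₀, ψ, φ : V are unit vectors with D (e₀ ⊗ ψ) = ψ ⊗ ψ and D (e₀ ⊗ φ) = φ ⊗ φ. Then ⟪ψ, φ⟫ = 0 or ψ = φ. -/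
open scoped InnerProductSpace

noncomputable def tensV (n : ℕ) (v w : EuclideanSpace ℂ (Fin n)) :
    EuclideanSpace ℂ (Fin n × Fin n) :=
  WithLp.toLp 2 (fun p : Fin n × Fin n => v p.1 * w p.2)

lemma inner_tensV_tensV (n : ℕ) (v w v' w' : EuclideanSpace ℂ (Fin n)) :
    ⟪tensV n v w, tensV n v' w'⟫_ℂ = ⟪v, v'⟫_ℂ * ⟪w, w'⟫_ℂ := by
  simp only [tensV, PiLp.inner_apply, RCLike.inner_apply, Fintype.sum_prod_type,
    Finset.sum_mul_sum, map_mul]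
  exact Finset.sum_congr rfl fun _ _ => Finset.sum_congr rfl fun _ _ => by ring

lemma inner_eq_zero_or_eq_of_isIdempotentElem_inner {𝕜 E : Type*} [RCLike 𝕜]
    [NormedAddCommGroup E] [InnerProductSpace 𝕜 E] {x y : E} (hx : ‖x‖ = 1) (hy : ‖y‖ = 1)
    (h : IsIdempotentElem ⟪x, y⟫_𝕜) : ⟪x, y⟫_𝕜 = 0 ∨ x = y :=
  (IsIdempotentElem.iff_eq_zero_or_one.mp h).imp_right (inner_eq_one_iff_of_norm_eq_one hx hy).mp

/-- No-cloning theorem: an inner-product-preserving linear map cloning two unit states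
forces them to be orthogonal or equal. -/
theorem no_cloning (n : ℕ)
    (D : EuclideanSpace ℂ (Fin n × Fin n) →ₗ[ℂ] EuclideanSpace ℂ (Fin n × Fin n))
    (hD : ∀ u v : EuclideanSpace ℂ (Fin n × Fin n), ⟪D u, D v⟫_ℂ = ⟪u, v⟫_ℂ)
    (e₀ ψ φ : EuclideanSpace ℂ (Fin n))
    (he₀ : ‖e₀‖ = 1) (hψ : ‖ψ‖ = 1) (hφ : ‖φ‖ = 1)
    (hDψ : D (tensV n e₀ ψ) = tensV n ψ ψ)
    (hDφ : D (tensV n e₀ φ) = tensV n φ φ) :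
    ⟪ψ, φ⟫_ℂ = 0 ∨ ψ = φ := by
  have hidem : IsIdempotentElem ⟪ψ, φ⟫_ℂ := by
    have h := hD (tensV n e₀ ψ) (tensV n e₀ φ)
    rwa [hDψ, hDφ, inner_tensV_tensV, inner_tensV_tensV,
      inner_self_eq_one_of_norm_eq_one he₀, one_mul] at h
  exact inner_eq_zero_or_eq_of_isIdempotentElem_inner hψ hφ hidem
end

section
/- Fusion of phase states: for all α β : ℝ, δGᴴ.mulVec ((plus α) ⊗ (plus β)) = plus (α + β); that is, the multiplication (fusion) δGᴴ of the computational-basis classical structure sends |+_α⟩ ⊗ |+_β⟩ to |+_{α+β}⟩. -/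
open Matrix

/-- The green (computational-basis) copying matrix. -/
def deltaG : Matrix (Fin 2 × Fin 2) (Fin 2) ℂ :=
  fun p k => if p.1 = k ∧ p.2 = k then 1 else 0

/-- Kronecker product of two qubit state vectors. -/
def vkron (v w : Fin 2 → ℂ) : Fin 2 × Fin 2 → ℂ := fun p => v p.1 * w p.2

/-- The unnormalised phase state `|+_θ⟩`. -/
noncomputable def plus (θ : ℝ) : Fin 2 → ℂ := ![1, Complex.exp ((θ : ℂ) * Complex.I)]

/-- Fusion of phase states: `δG† (|+_α⟩ ⊗ |+_β⟩) = |+_{α+β}⟩`. -/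
theorem fusion_phase_states (α β : ℝ) :
    deltaGᴴ.mulVec (vkron (plus α) (plus β)) = plus (α + β) := by
  funext k
  simp only [mulVec, dotProduct, conjTranspose_apply, deltaG, vkron, plus,
    Fintype.sum_prod_type]
  fin_cases k <;>
    simp [Fin.sum_univ_succ, ← Complex.exp_add, add_mul]
end

section
/- Phase states are unbiased for the computational-basis classical structure: for every θ : ℝ, δGᴴ.mulVec ((plus θ) ⊗ (plus (−θ))) = ![1, 1], i.e. fusing |+_θ⟩ with its conjugate |+_{−θ}⟩ yields the unit εGᴴ of the green structure. -/
open Matrix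

/-- Phase states are unbiased for the computational-basis classical structure:
fusing `|+_θ⟩` with `|+_{−θ}⟩` yields the green unit `![1, 1]`. -/
theorem phase_states_unbiased (θ : ℝ) :
    deltaGᴴ.mulVec (vkron (plus θ) (plus (-θ))) = ![1, 1] := by
  have h : Complex.exp ((θ : ℂ) * Complex.I) * Complex.exp (((-θ : ℝ) : ℂ) * Complex.I) = 1 := by
    rw [← Complex.exp_add]
    push_cast
    ring_nf
    exact Complex.exp_zero
  funext k
  simp only [mulVec, dotProduct, deltaG, vkron, plus, conjTranspose_apply, Fintype.sum_prod_type]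
  fin_cases k <;>
    simp [Fin.sum_univ_two, Matrix.cons_val_zero, Matrix.cons_val_one, ← Complex.exp_add]
end

section
/- Correctness of the teleportation protocol: let X = !![0,1;1,0] and Z = !![1,0;0,−1] be the Pauli matrices and Φ : Fin 2 × Fin 2 → ℂ, Φ (i,j) = if i = j then 1 else 0, the unnormalised Bell state. For a b : ℕ define the Bell vector Φab := ((Z ^ a * X ^ b) ⊗ 1₂).mulVec Φ. Then for all a b ∈ {0, 1} and every ψ : Fin 2 → ℂ, defining w : Fin 2 → ℂ by w k = Σ_{i,j} star (Φab (i,j)) * ψ i * Φ (j,k) (the Bell-basis projection of ψ ⊗ Φ onto Φab in the first two tensor factors), one has (Z ^ a * X ^ b).mulVec w = ψ; that is, after Alice's Bell measurement outcome (a, b) and Bob's Pauli correction Z^a X^b, Bob recovers Alice's input state exactly. -/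
open Matrix
open scoped Kronecker BigOperators

/-- The Pauli X matrix. -/
def Xm : Matrix (Fin 2) (Fin 2) ℂ := !![0, 1; 1, 0]

/-- The Pauli Z matrix. -/
def Zm : Matrix (Fin 2) (Fin 2) ℂ := !![1, 0; 0, -1]

/-- The unnormalised Bell state `Σᵢ eᵢ ⊗ eᵢ`. -/
def BellPhi : Fin 2 × Fin 2 → ℂ := fun p => if p.1 = p.2 then 1 else 0

/-- The (unnormalised) Bell basis vector `Φ_{ab} = ((Z^a X^b) ⊗ 1) Φ`. -/
noncomputable def BellPhiab (a b : ℕ) : Fin 2 × Fin 2 → ℂ :=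
  ((Zm ^ a * Xm ^ b) ⊗ₖ (1 : Matrix (Fin 2) (Fin 2) ℂ)).mulVec BellPhi

/-- Correctness of the teleportation protocol: after Alice's Bell measurement outcome
`(a, b)` and Bob's Pauli correction `Z^a X^b`, Bob recovers Alice's input state. -/
theorem teleportation_correct (a b : ℕ) (ha : a = 0 ∨ a = 1) (hb : b = 0 ∨ b = 1)
    (ψ : Fin 2 → ℂ) :
    (Zm ^ a * Xm ^ b).mulVec
        (fun k => ∑ i : Fin 2, ∑ j : Fin 2,
          star (BellPhiab a b (i, j)) * ψ i * BellPhi (j, k))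
      = ψ := by
  rcases ha with rfl | rfl <;> rcases hb with rfl | rfl <;>
    funext k <;> fin_cases k <;>
    simp [BellPhiab, BellPhi, Xm, Zm, mulVec, dotProduct, Fin.sum_univ_two,
      Fintype.sum_prod_type, kroneckerMap_apply, Matrix.one_apply, pow_succ] <;> ring
end
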